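/- The map Ψ^c(f,g) = argmin_u { T(u) + E(f)‖u − g‖₂²/(2c) } is continuous on K₁ × K₂, satisfying the quantitative estimate ‖Ψ^c(f',g') − Ψ^c(f,g)‖₂ ≤ ‖g' − g‖₂ + 2‖g'‖₂·|E(f') − E(f)|/E(f). -/

import Mathlib

open Finset Filter Topology

noncomputable def meanV {n : ℕ} (f : Fin n → ℝ) : ℝ := (∑ i, f i) / n
noncomputable def TVfun {n : ℕ} (w : Fin n → Fin n → ℝ) (f : Fin n → ℝ) : ℝ :=
  (1/2) * ∑ i, ∑ j, w i j * |f i - f j|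
noncomputable def Bfun {n : ℕ} (f : Fin n → ℝ) : ℝ := ∑ i, |f i - meanV f|
noncomputable def Efun {n : ℕ} (w : Fin n → Fin n → ℝ) (f : Fin n → ℝ) : ℝ :=
  TVfun w f / Bfun f
noncomputable def norm2 {n : ℕ} (f : Fin n → ℝ) : ℝ := Real.sqrt (∑ i, (f i)^2)
noncomputable def dotV {n : ℕ} (u v : Fin n → ℝ) : ℝ := ∑ i, u i * v i
def IsSubgradient {n : ℕ} (F : (Fin n → ℝ) → ℝ) (f v : Fin n → ℝ) : Prop :=
  ∀ y, F f + dotV v (y - f) ≤ F y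
def GraphConnected {n : ℕ} (w : Fin n → Fin n → ℝ) : Prop :=
  ∀ i j : Fin n, Relation.ReflTransGen (fun a b => 0 < w a b) i j
def Nonconstant {n : ℕ} (f : Fin n → ℝ) : Prop := ∃ i j, f i ≠ f j
def signSet (t : ℝ) : Set ℝ := if t > 0 then {1} else if t < 0 then {-1} else Set.Icc (-1) 1
noncomputable def P0 {n : ℕ} (f : Fin n → ℝ) : Fin n → ℝ := fun i => f i - meanV f

def K1set (n : ℕ) : Set (Fin n → ℝ) := {u | norm2 u = 1 ∧ meanV u = 0}
def K2set (n : ℕ) (c : ℝ) : Set (Fin n → ℝ) :=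
  {u | 1 ≤ norm2 u ∧ norm2 u ≤ 1 + 2*c*Real.sqrt n ∧ meanV u = 0}

/-!
`Ψ^c(f, ·)` is the proximal map of `T` with weight `μ = E(f)/(2c)`, read in Euclidean space.
Since `T` is convex, the objective `T v + μ‖v - g‖²` grows at least like `μ‖v - u‖²` away from
its minimiser `u`. Adding this growth bound at two minimisers shows that the proximal map is
1-Lipschitz in `g`, and that changing the weight from `μ` to `μ'` moves it by at most
`2‖g‖|μ' - μ|/μ`, because `‖u - g‖ ≤ ‖g‖` when `0` minimises `T`. The triangle inequality gives
the estimate; continuity follows since `E` is continuous and positive on `K₁` (a unit mean-zero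
vector is nonconstant, so on a connected graph its total variation is positive).
-/

theorem continuousWithinAt_of_dist_le {α β : Type*} [TopologicalSpace α] [PseudoMetricSpace β]
    {F : α → β} {h : α → ℝ} {s : Set α} {x : α} (hh : ContinuousWithinAt h s x) (hx : h x = 0)
    (hF : ∀ y ∈ s, dist (F y) (F x) ≤ h y) : ContinuousWithinAt F s x := by
  rw [ContinuousWithinAt, tendsto_iff_dist_tendsto_zero]
  refine squeeze_zero' (Eventually.of_forall fun _ => dist_nonneg)
    (eventually_nhdsWithin_of_forall hF) ?_
  simpa only [ContinuousWithinAt, hx] using hh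

theorem mul_abs_div_sub_div_div_div {k : ℝ} (hk : 0 < k) (x a a' : ℝ) :
    x * |a' / k - a / k| / (a / k) = x * |a' - a| / a := by
  rw [← sub_div, abs_div, abs_of_pos hk]
  field_simp

section ProxPoint

variable {E : Type*} [NormedAddCommGroup E]

def IsProxPoint (T : E → ℝ) (μ : ℝ) (g u : E) : Prop :=
  ∀ v, T u + μ * ‖u - g‖ ^ 2 ≤ T v + μ * ‖v - g‖ ^ 2

theorem IsProxPoint.norm_sub_le_norm {T : E → ℝ} {μ : ℝ} {g u : E} (hT0 : ∀ v, T 0 ≤ T v)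
    (hμ : 0 < μ) (hu : IsProxPoint T μ g u) :
    ‖u - g‖ ≤ ‖g‖ := by
  have h := hu 0
  rw [zero_sub, norm_neg] at h
  have : ‖u - g‖ ^ 2 ≤ ‖g‖ ^ 2 := le_of_mul_le_mul_left (by linarith [hT0 u]) hμ
  exact (pow_le_pow_iff_left₀ (norm_nonneg _) (norm_nonneg _) two_ne_zero).mp this

variable [InnerProductSpace ℝ E]

theorem norm_smul_add_smul_sq_of_add_eq_one {a b : ℝ} (hab : a + b = 1) (x y : E) :
    ‖a • x + b • y‖ ^ 2 = a * ‖x‖ ^ 2 + b * ‖y‖ ^ 2 - a * b * ‖x - y‖ ^ 2 := by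
  rw [norm_add_sq_real, norm_sub_sq_real, norm_smul, norm_smul, real_inner_smul_left,
    real_inner_smul_right, mul_pow, mul_pow, Real.norm_eq_abs, Real.norm_eq_abs, sq_abs, sq_abs]
  obtain rfl := eq_sub_of_add_eq hab
  ring

namespace IsProxPoint

variable {T : E → ℝ} {μ μ' : ℝ} {g g' u u' : E}

theorem add_mul_norm_sub_sq_le (hT : ConvexOn ℝ Set.univ T)
    (hu : IsProxPoint T μ g u) (v : E) :
    T u + μ * ‖u - g‖ ^ 2 + μ * ‖v - u‖ ^ 2 ≤ T v + μ * ‖v - g‖ ^ 2 := by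
  set F := fun x => T x + μ * ‖x - g‖ ^ 2
  have hstep : ∀ t ∈ Set.Ioo (0 : ℝ) 1, F u + μ * (1 - t) * ‖v - u‖ ^ 2 ≤ F v := by
    rintro t ⟨ht0, ht1⟩
    have hconv := hT.2 (Set.mem_univ u) (Set.mem_univ v) (by linarith : 0 ≤ 1 - t) ht0.le
      (sub_add_cancel 1 t)
    have hsq : ‖(1 - t) • u + t • v - g‖ ^ 2
        = (1 - t) * ‖u - g‖ ^ 2 + t * ‖v - g‖ ^ 2 - (1 - t) * t * ‖v - u‖ ^ 2 := by
      rw [← norm_neg (v - u), neg_sub]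
      convert norm_smul_add_smul_sq_of_add_eq_one (sub_add_cancel 1 t) (u - g) (v - g) using 4
      · module
      · rw [sub_sub_sub_cancel_right]
    have hmin := hu ((1 - t) • u + t • v)
    simp only [smul_eq_mul] at hconv
    rw [hsq] at hmin
    have : t * (F u + μ * (1 - t) * ‖v - u‖ ^ 2) ≤ t * F v := by
      simp only [F]; nlinarith
    exact le_of_mul_le_mul_left this ht0
  have hlim : Filter.Tendsto (fun t => F u + μ * (1 - t) * ‖v - u‖ ^ 2) (𝓝[>] 0)
      (𝓝 (F u + μ * ‖v - u‖ ^ 2)) := by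
    have : Continuous (fun t : ℝ => F u + μ * (1 - t) * ‖v - u‖ ^ 2) := by fun_prop
    simpa using this.continuousWithinAt.tendsto (x := 0) (s := Set.Ioi 0)
  exact le_of_tendsto hlim (Filter.mem_of_superset (Ioo_mem_nhdsGT one_pos) hstep)

theorem norm_sub_le_norm_sub (hT : ConvexOn ℝ Set.univ T) (hμ : 0 < μ)
    (hu : IsProxPoint T μ g u) (hu' : IsProxPoint T μ g' u') :
    ‖u' - u‖ ≤ ‖g' - g‖ := by
  have h := hu.add_mul_norm_sub_sq_le hT u'
  have h' := hu'.add_mul_norm_sub_sq_le hT u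
  have hpar : ‖u' - g‖ ^ 2 - ‖u - g‖ ^ 2 + ‖u - g'‖ ^ 2 - ‖u' - g'‖ ^ 2
      = 2 * inner ℝ (u' - u) (g' - g) := by
    simp only [norm_sub_sq_real, inner_sub_left, inner_sub_right, real_inner_comm]
    ring
  have hsq : ‖u' - u‖ ^ 2 ≤ inner ℝ (u' - u) (g' - g) := by
    rw [norm_sub_rev u u'] at h'
    nlinarith
  nlinarith [real_inner_le_norm (u' - u) (g' - g), norm_nonneg (u' - u), norm_nonneg (g' - g)]

theorem norm_sub_le_of_weight (hT : ConvexOn ℝ Set.univ T) (hT0 : ∀ v, T 0 ≤ T v)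
    (hμ : 0 < μ) (hμ' : 0 < μ') (hu : IsProxPoint T μ g u) (hu' : IsProxPoint T μ' g u') :
    ‖u' - u‖ ≤ 2 * ‖g‖ * |μ' - μ| / μ := by
  have h := hu.add_mul_norm_sub_sq_le hT u'
  have h' := hu'.add_mul_norm_sub_sq_le hT u
  rw [norm_sub_rev u u'] at h'
  have hdiff : |‖u - g‖ ^ 2 - ‖u' - g‖ ^ 2| ≤ 2 * ‖g‖ * ‖u' - u‖ := by
    rw [sq_sub_sq, abs_mul]
    have h1 := abs_norm_sub_norm_le (u - g) (u' - g)
    rw [sub_sub_sub_cancel_right, norm_sub_rev u u'] at h1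
    have h2 := hu.norm_sub_le_norm hT0 hμ
    have h3 := hu'.norm_sub_le_norm hT0 hμ'
    rw [abs_of_nonneg (by positivity)]
    exact mul_le_mul (by linarith) h1 (abs_nonneg _) (by positivity)
  have hgrowth : (μ + μ') * ‖u' - u‖ ^ 2 ≤ |μ' - μ| * (2 * ‖g‖ * ‖u' - u‖) := by
    calc (μ + μ') * ‖u' - u‖ ^ 2 ≤ (μ' - μ) * (‖u - g‖ ^ 2 - ‖u' - g‖ ^ 2) := by linarith
      _ ≤ |μ' - μ| * |‖u - g‖ ^ 2 - ‖u' - g‖ ^ 2| := by rw [← abs_mul]; exact le_abs_self _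
      _ ≤ |μ' - μ| * (2 * ‖g‖ * ‖u' - u‖) := by gcongr
  rw [le_div_iff₀ hμ]
  rcases (norm_nonneg (u' - u)).eq_or_lt with he | he
  · rw [← he, zero_mul]; positivity
  · have : (μ + μ') * ‖u' - u‖ ≤ |μ' - μ| * (2 * ‖g‖) :=
      le_of_mul_le_mul_right (by linarith) he
    nlinarith

theorem norm_sub_le_add (hT : ConvexOn ℝ Set.univ T) (hT0 : ∀ v, T 0 ≤ T v)
    (hμ : 0 < μ) (hμ' : 0 < μ') {u₁ u₂ u₃ : E} (hu₁ : IsProxPoint T μ g u₁)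
    (hu₂ : IsProxPoint T μ g' u₂) (hu₃ : IsProxPoint T μ' g' u₃) :
    ‖u₃ - u₁‖ ≤ ‖g' - g‖ + 2 * ‖g'‖ * |μ' - μ| / μ :=
  calc ‖u₃ - u₁‖ ≤ ‖u₂ - u₁‖ + ‖u₃ - u₂‖ := by
        rw [add_comm]; exact norm_sub_le_norm_sub_add_norm_sub u₃ u₂ u₁
    _ ≤ ‖g' - g‖ + 2 * ‖g'‖ * |μ' - μ| / μ :=
        add_le_add (hu₁.norm_sub_le_norm_sub hT hμ hu₂)
          (hu₂.norm_sub_le_of_weight hT hT0 hμ hμ' hu₃)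

end IsProxPoint

end ProxPoint

section GraphFunctionals

variable {n : ℕ} {w : Fin n → Fin n → ℝ} {f : Fin n → ℝ}

theorem TVfun_nonneg (hw : ∀ i j, 0 ≤ w i j) (f : Fin n → ℝ) : 0 ≤ TVfun w f := by
  unfold TVfun
  exact mul_nonneg (by norm_num)
    (Finset.sum_nonneg fun i _ => Finset.sum_nonneg fun j _ => mul_nonneg (hw i j) (abs_nonneg _))

theorem TVfun_zero (w : Fin n → Fin n → ℝ) : TVfun w 0 = 0 := by
  simp [TVfun]

theorem convexOn_TVfun (hw : ∀ i j, 0 ≤ w i j) : ConvexOn ℝ Set.univ (TVfun w) := by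
  refine ⟨convex_univ, fun x _ y _ a b ha hb _ => ?_⟩
  have hedge : ∀ i j, |(a • x + b • y) i - (a • x + b • y) j|
      ≤ a * |x i - x j| + b * |y i - y j| := fun i j =>
    calc |(a • x + b • y) i - (a • x + b • y) j| = |a * (x i - x j) + b * (y i - y j)| := by
          simp only [Pi.add_apply, Pi.smul_apply, smul_eq_mul]; congr 1; ring
      _ ≤ a * |x i - x j| + b * |y i - y j| := by
          grw [abs_add_le, abs_mul, abs_mul, abs_of_nonneg ha, abs_of_nonneg hb]
  calc TVfun w (a • x + b • y)
      ≤ 1 / 2 * ∑ i, ∑ j, w i j * (a * |x i - x j| + b * |y i - y j|) := by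
        unfold TVfun; gcongr with i _ j _; exacts [hw i j, hedge i j]
    _ = a • TVfun w x + b • TVfun w y := by
        simp only [TVfun, smul_eq_mul, Finset.mul_sum, ← Finset.sum_add_distrib]
        exact Finset.sum_congr rfl fun i _ => Finset.sum_congr rfl fun j _ => by ring

theorem TVfun_pos (hw : ∀ i j, 0 ≤ w i j) (hconn : GraphConnected w) (hf : Nonconstant f) :
    0 < TVfun w f := by
  obtain ⟨a, b, hab, hfab⟩ : ∃ a b, 0 < w a b ∧ f a ≠ f b := by
    by_contra! h
    obtain ⟨i, j, hij⟩ := hf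
    refine hij ?_
    clear hij
    induction hconn i j with
    | refl => rfl
    | tail _ hbc ih => exact ih.trans (h _ _ hbc)
  unfold TVfun
  have hterm : ∀ i j, 0 ≤ w i j * |f i - f j| := fun i j => mul_nonneg (hw i j) (abs_nonneg _)
  have : 0 < ∑ i, ∑ j, w i j * |f i - f j| :=
    Finset.sum_pos' (fun i _ => Finset.sum_nonneg fun j _ => hterm i j)
      ⟨a, Finset.mem_univ a, Finset.sum_pos' (fun j _ => hterm a j)
        ⟨b, Finset.mem_univ b, mul_pos hab (abs_pos.mpr (sub_ne_zero.mpr hfab))⟩⟩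
  positivity

theorem Bfun_pos (hf : Nonconstant f) : 0 < Bfun f := by
  obtain ⟨i, j, hij⟩ := hf
  obtain ⟨k, hk⟩ : ∃ k, f k ≠ meanV f := by
    by_contra! h
    exact hij ((h i).trans (h j).symm)
  exact Finset.sum_pos' (fun i _ => abs_nonneg _)
    ⟨k, Finset.mem_univ k, abs_pos.mpr (sub_ne_zero.mpr hk)⟩

theorem Efun_pos (hw : ∀ i j, 0 ≤ w i j) (hconn : GraphConnected w) (hf : Nonconstant f) :
    0 < Efun w f :=
  div_pos (TVfun_pos hw hconn hf) (Bfun_pos hf)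

theorem nonconstant_of_meanV_eq_zero (hmean : meanV f = 0) (hf : f ≠ 0) : Nonconstant f := by
  obtain ⟨i, hi⟩ := Function.ne_iff.mp hf
  by_contra! hconst
  simp only [Nonconstant, not_exists, not_not] at hconst
  have hn : (n : ℝ) ≠ 0 := Nat.cast_ne_zero.mpr i.pos.ne'
  have : meanV f = f i := by
    simp only [meanV, fun j => hconst j i, Finset.sum_const, Finset.card_univ, Fintype.card_fin,
      nsmul_eq_mul]
    field_simp
  exact hi (this ▸ hmean)

theorem continuous_TVfun (w : Fin n → Fin n → ℝ) : Continuous (TVfun w) := by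
  unfold TVfun; fun_prop

theorem continuous_Bfun : Continuous (Bfun : (Fin n → ℝ) → ℝ) := by
  unfold Bfun meanV; fun_prop

theorem norm2_eq_norm_toLp (f : Fin n → ℝ) : norm2 f = ‖WithLp.toLp 2 f‖ := by
  simp [norm2, EuclideanSpace.norm_eq]

@[fun_prop]
theorem continuous_norm2 : Continuous (norm2 : (Fin n → ℝ) → ℝ) := by
  unfold norm2; fun_prop

theorem nonconstant_of_mem_K1set {f : Fin n → ℝ} (hf : f ∈ K1set n) : Nonconstant f :=
  nonconstant_of_meanV_eq_zero hf.2 (by rintro rfl; simp [K1set, norm2] at hf)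

theorem continuousAt_Efun {f : Fin n → ℝ} (hB : Bfun f ≠ 0) : ContinuousAt (Efun w) f :=
  (continuous_TVfun w).continuousAt.div continuous_Bfun.continuousAt hB

theorem dist_le_norm2_sub (x y : Fin n → ℝ) : dist x y ≤ norm2 (x - y) := by
  rw [norm2_eq_norm_toLp, WithLp.toLp_sub, ← dist_eq_norm]
  simpa using (PiLp.lipschitzWith_ofLp 2 (fun _ : Fin n => ℝ)).dist_le_mul
    (WithLp.toLp 2 x) (WithLp.toLp 2 y)

theorem continuousOn_of_norm2_sub_le {Ψ : (Fin n → ℝ) → (Fin n → ℝ) → (Fin n → ℝ)}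
    {K K' : Set (Fin n → ℝ)} {φ : (Fin n → ℝ) → ℝ} (hφ : ∀ f ∈ K, ContinuousAt φ f)
    (hΨ : ∀ f ∈ K, ∀ g ∈ K', ∀ f' ∈ K, ∀ g' ∈ K',
      norm2 (Ψ f' g' - Ψ f g) ≤ norm2 (g' - g) + 2 * norm2 g' * |φ f' - φ f| / φ f) :
    ContinuousOn (fun p : (Fin n → ℝ) × (Fin n → ℝ) => Ψ p.1 p.2) (K ×ˢ K') := by
  rintro ⟨f, g⟩ ⟨hf, hg⟩
  have hφf : ContinuousAt (fun q : (Fin n → ℝ) × (Fin n → ℝ) => φ q.1) (f, g) :=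
    (hφ f hf).comp continuousAt_fst
  refine continuousWithinAt_of_dist_le
    (h := fun q => norm2 (q.2 - g) + 2 * norm2 q.2 * |φ q.1 - φ f| / φ f) ?_ ?_ ?_
  · fun_prop
  · simp [norm2]
  · rintro ⟨f', g'⟩ ⟨hf', hg'⟩
    exact (dist_le_norm2_sub _ _).trans (hΨ f hf g hg f' hf' g' hg')

theorem isProxPoint_toLp {a c : ℝ} {g u : Fin n → ℝ}
    (h : ∀ v, TVfun w u + a * norm2 (u - g) ^ 2 / (2 * c)
      ≤ TVfun w v + a * norm2 (v - g) ^ 2 / (2 * c)) :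
    IsProxPoint (fun x : EuclideanSpace ℝ (Fin n) => TVfun w x.ofLp) (a / (2 * c))
      (WithLp.toLp 2 g) (WithLp.toLp 2 u) := by
  intro v
  simpa only [norm2_eq_norm_toLp, WithLp.toLp_sub, WithLp.toLp_ofLp, mul_div_right_comm]
    using h v.ofLp

end GraphFunctionals

theorem stmt15_general {n : ℕ} (w : Fin n → Fin n → ℝ)
    (hnn : ∀ i j, 0 ≤ w i j)
    (hconn : GraphConnected w) (c : ℝ) (hc : 0 < c)
    (Psi : (Fin n → ℝ) → (Fin n → ℝ) → (Fin n → ℝ))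
    (hPsi : ∀ f ∈ K1set n, ∀ g ∈ K2set n c, ∀ u : Fin n → ℝ,
      TVfun w (Psi f g) + Efun w f * norm2 (Psi f g - g)^2 / (2*c)
        ≤ TVfun w u + Efun w f * norm2 (u - g)^2 / (2*c)) :
    ContinuousOn (fun p : (Fin n → ℝ) × (Fin n → ℝ) => Psi p.1 p.2)
      ((K1set n) ×ˢ (K2set n c)) ∧
    (∀ f ∈ K1set n, ∀ g ∈ K2set n c, ∀ f' ∈ K1set n, ∀ g' ∈ K2set n c,
      norm2 (Psi f' g' - Psi f g) ≤
        norm2 (g' - g) + 2 * norm2 g' * |Efun w f' - Efun w f| / Efun w f) := by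
  set T : EuclideanSpace ℝ (Fin n) → ℝ := fun x => TVfun w x.ofLp
  have hT : ConvexOn ℝ Set.univ T :=
    (convexOn_TVfun hnn).comp_linearMap (WithLp.linearEquiv 2 ℝ (Fin n → ℝ)).toLinearMap
  have hT0 : ∀ v, T 0 ≤ T v := fun v => by
    simp only [T, WithLp.ofLp_zero, TVfun_zero]; exact TVfun_nonneg hnn _
  have hμ : ∀ f ∈ K1set n, 0 < Efun w f / (2 * c) := fun f hf =>
    div_pos (Efun_pos hnn hconn (nonconstant_of_mem_K1set hf)) (by positivity)
  have hest : ∀ f ∈ K1set n, ∀ g ∈ K2set n c, ∀ f' ∈ K1set n, ∀ g' ∈ K2set n c,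
      norm2 (Psi f' g' - Psi f g) ≤
        norm2 (g' - g) + 2 * norm2 g' * |Efun w f' - Efun w f| / Efun w f := by
    intro f hf g hg f' hf' g' hg'
    have := (isProxPoint_toLp (hPsi f hf g hg)).norm_sub_le_add hT hT0 (hμ f hf) (hμ f' hf')
      (isProxPoint_toLp (hPsi f hf g' hg')) (isProxPoint_toLp (hPsi f' hf' g' hg'))
    rw [mul_abs_div_sub_div_div_div (by positivity)] at this
    simpa only [norm2_eq_norm_toLp, WithLp.toLp_sub] using this
  exact ⟨continuousOn_of_norm2_sub_le
    (fun f hf => continuousAt_Efun (Bfun_pos (nonconstant_of_mem_K1set hf)).ne') hest, hest⟩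

theorem stmt15 {n : ℕ} (w : Fin n → Fin n → ℝ)
    (hsym : ∀ i j, w i j = w j i) (hnn : ∀ i j, 0 ≤ w i j)
    (hconn : GraphConnected w) (c : ℝ) (hc : 0 < c)
    (Psi : (Fin n → ℝ) → (Fin n → ℝ) → (Fin n → ℝ))
    (hPsi : ∀ f ∈ K1set n, ∀ g ∈ K2set n c, ∀ u : Fin n → ℝ,
      TVfun w (Psi f g) + Efun w f * norm2 (Psi f g - g)^2 / (2*c)
        ≤ TVfun w u + Efun w f * norm2 (u - g)^2 / (2*c)) :
    ContinuousOn (fun p : (Fin n → ℝ) × (Fin n → ℝ) => Psi p.1 p.2)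
      ((K1set n) ×ˢ (K2set n c)) ∧
    (∀ f ∈ K1set n, ∀ g ∈ K2set n c, ∀ f' ∈ K1set n, ∀ g' ∈ K2set n c,
      norm2 (Psi f' g' - Psi f g) ≤
        norm2 (g' - g) + 2 * norm2 g' * |Efun w f' - Efun w f| / Efun w f) :=
  stmt15_general w hnn hconn c hc Psi hPsi
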